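/- For every k-form φ with affine coefficients on the standard n-simplex whose pullbacks to all k-faces are constant, one has φ = W(Rφ), where R is the de Rham map; i.e., W∘R = id on Λᵏₑ. -/

import Mathlib

open MeasureTheory Finset

/-- A real-valued function on `ℝⁿ` is affine if it has the form `x ↦ ∑ aᵢ xⁱ + b`. -/
def IsAffineFn {n : ℕ} (f : (Fin n → ℝ) → ℝ) : Prop :=
  ∃ (a : Fin n → ℝ) (b : ℝ), ∀ x, f x = (∑ i, a i * x i) + b

/-- The standard `n`-simplex `{x : xⁱ ≥ 0, ∑ xⁱ ≤ 1}` in `ℝⁿ`. -/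
def stdSimp (n : ℕ) : Set (Fin n → ℝ) :=
  {x | (∀ i, 0 ≤ x i) ∧ (∑ i, x i) ≤ 1}

/-- The basic alternating `k`-form `dx^I` (for a strictly increasing multi-index given by a
`k`-element subset `I` of `{1,…,n}`) evaluated on `k` vectors. -/
def dxI {n k : ℕ} (I : {s : Finset (Fin n) // s.card = k}) (v : Fin k → Fin n → ℝ) : ℝ :=
  Matrix.det (Matrix.of fun i j => v j ((I.1.orderIsoOfFin I.2 i : Fin n)))

/-- The `k`-form `∑_I f_I dx^I` with coefficient functions `f_I`, evaluated at the point `x`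
on the `k` vectors `v`. -/
def formEval {n k : ℕ} (f : {s : Finset (Fin n) // s.card = k} → (Fin n → ℝ) → ℝ)
    (x : Fin n → ℝ) (v : Fin k → Fin n → ℝ) : ℝ :=
  ∑ I : {s : Finset (Fin n) // s.card = k}, f I x * dxI I v

/-- The vertices of the standard `n`-simplex: `p₀ = 0`, `pᵢ = eᵢ`. -/
def vert (n : ℕ) : Fin (n+1) → Fin n → ℝ :=
  Fin.cases 0 (fun j => Pi.single j 1)

/-- Affine parametrization of the `k`-face of the standard `n`-simplex with vertex set `S`
(vertices taken in increasing order), defined on the standard `k`-simplex. -/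
def facePt {n k : ℕ} (S : {s : Finset (Fin (n+1)) // s.card = k+1}) (y : Fin k → ℝ) :
    Fin n → ℝ :=
  vert n ((S.1.orderIsoOfFin S.2 0 : Fin (n+1))) +
    ∑ s : Fin k, y s • (vert n ((S.1.orderIsoOfFin S.2 s.succ : Fin (n+1))) -
      vert n ((S.1.orderIsoOfFin S.2 0 : Fin (n+1))))

/-- The differential of the face parametrization `facePt S`. -/
def faceDir {n k : ℕ} (S : {s : Finset (Fin (n+1)) // s.card = k+1}) (w : Fin k → ℝ) :
    Fin n → ℝ :=
  ∑ s : Fin k, w s • (vert n ((S.1.orderIsoOfFin S.2 s.succ : Fin (n+1))) -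
    vert n ((S.1.orderIsoOfFin S.2 0 : Fin (n+1))))

/-- Barycentric coordinates of the standard `n`-simplex: `ν₀ = 1 - ∑ xⁱ`, `νᵢ = xⁱ`. -/
def nu (n : ℕ) (j : Fin (n+1)) (x : Fin n → ℝ) : ℝ :=
  Fin.cases (1 - ∑ i, x i) (fun i => x i) j

/-- The differentials `dνⱼ` of the barycentric coordinates, as linear functionals. -/
def dnu (n : ℕ) (j : Fin (n+1)) (v : Fin n → ℝ) : ℝ :=
  Fin.cases (-(∑ i, v i)) (fun i => v i) j

/-- The Whitney form `W τ* = k! ∑ⱼ (-1)ʲ ν_{iⱼ} dν_{i₀} ∧ ⋯ ∧ (omit dν_{iⱼ}) ∧ ⋯ ∧ dν_{i_k}`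
of the dual cochain of the face with vertex set `S`, evaluated at `x` on the vectors `v`. -/
def whitneyFace {n k : ℕ} (S : {s : Finset (Fin (n+1)) // s.card = k+1})
    (x : Fin n → ℝ) (v : Fin k → Fin n → ℝ) : ℝ :=
  (Nat.factorial k : ℝ) * ∑ j : Fin (k+1), (-1 : ℝ) ^ (j : ℕ) *
    nu n ((S.1.orderIsoOfFin S.2 j : Fin (n+1))) x *
    Matrix.det (Matrix.of fun (t : Fin k) (m2 : Fin k) =>
      dnu n ((S.1.orderIsoOfFin S.2 (j.succAbove t) : Fin (n+1))) (v m2))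

/-- The Whitney map `W`, extended linearly to all real `k`-cochains. -/
def whitney {n k : ℕ} (c : {s : Finset (Fin (n+1)) // s.card = k+1} → ℝ)
    (x : Fin n → ℝ) (v : Fin k → Fin n → ℝ) : ℝ :=
  ∑ S, c S * whitneyFace S x v

/-- The integral of a `k`-form (given by its evaluation function `F`) over the `k`-face with
vertex set `S`, computed via the parametrization `facePt S`. -/
noncomputable def faceIntegral {n k : ℕ} (S : {s : Finset (Fin (n+1)) // s.card = k+1})
    (F : (Fin n → ℝ) → (Fin k → Fin n → ℝ) → ℝ) : ℝ :=
  ∫ y in stdSimp k, F (facePt S y) (fun s => faceDir S (Pi.single s 1))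

/-- A `k`-form (given by its evaluation function) pulls back to a constant form on every
`k`-face of the standard `n`-simplex. -/
def ConstOnFaces {n k : ℕ} (F : (Fin n → ℝ) → (Fin k → Fin n → ℝ) → ℝ) : Prop :=
  ∀ S : {s : Finset (Fin (n+1)) // s.card = k+1}, ∃ cst : ℝ,
    ∀ y ∈ stdSimp k, ∀ w : Fin k → Fin k → ℝ,
      F (facePt S y) (fun i => faceDir S (w i)) = cst * Matrix.det (Matrix.of fun i j => w j i)
/-!
Let `c = Rφ`. On a `k`-face `S` the form `φ` pulls back to `cst S` times the volume form, and the
standard `k`-simplex has volume `1/k!`, so `c S = cst S / k!`. The Whitney form of a face pulls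
back to `0` on every other `k`-face and to `k!` times the volume form on itself; hence `φ` and
`W c` have the same pullback to every `k`-face. Their difference `Ψ` has affine coefficients and
vanishing pullbacks. At a vertex `a` the edges issuing from `a` form a basis of `ℝⁿ`, and any `k`
of them span a `k`-face through `a`; so the alternating form `Ψ a` vanishes on every `k`-tuple of
distinct basis vectors, i.e. `Ψ a = 0`. An affine function vanishing at all vertices is zero.
-/

abbrev KSubset (n k : ℕ) := {s : Finset (Fin n) // s.card = k}

namespace KSubset

variable {n k : ℕ} (I : KSubset n k)

def emb : Fin k ↪o Fin n := I.1.orderEmbOfFin I.2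

@[simp] lemma orderEmbOfFin_eq_emb : I.1.orderEmbOfFin I.2 = I.emb := rfl

lemma emb_mem (t : Fin k) : I.emb t ∈ I.1 := Finset.orderEmbOfFin_mem _ _ _

lemma exists_emb_eq {p : Fin n} (hp : p ∈ I.1) : ∃ t, I.emb t = p := by
  rw [← Set.mem_range, emb, Finset.range_orderEmbOfFin]
  exact hp

lemma emb_ne_of_notMem {p : Fin n} (hp : p ∉ I.1) (t : Fin k) : I.emb t ≠ p :=
  fun h => hp (h ▸ I.emb_mem t)

end KSubset

lemma AlternatingMap.finsetSum_apply {R M N ι α : Type*} [CommSemiring R] [AddCommMonoid M]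
    [Module R M] [AddCommMonoid N] [Module R N] (s : Finset α) (g : α → M [⋀^ι]→ₗ[R] N)
    (v : ι → M) : (∑ i ∈ s, g i) v = ∑ i ∈ s, g i v :=
  map_sum (⟨⟨fun g => g v, rfl⟩, fun _ _ => rfl⟩ : (M [⋀^ι]→ₗ[R] N) →+ N) g s

section DetAlt

variable {R M : Type*} [CommRing R] [AddCommGroup M] [Module R M] {k : ℕ}

/-- The wedge product `ℓ₀ ∧ ⋯ ∧ ℓₖ₋₁` of linear functionals. -/
noncomputable def detAlt (ℓ : Fin k → M →ₗ[R] R) : M [⋀^Fin k]→ₗ[R] R :=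
  Matrix.detRowAlternating.compLinearMap (LinearMap.pi ℓ)

lemma detAlt_apply (ℓ : Fin k → M →ₗ[R] R) (v : Fin k → M) :
    detAlt ℓ v = (Matrix.of fun i j => ℓ i (v j)).det := by
  rw [← Matrix.det_transpose]
  rfl

end DetAlt

lemma Matrix.det_eq_det_submatrix_succ_of_sum_rows {R : Type*} [CommRing R] {k : ℕ}
    (B : Matrix (Fin (k+1)) (Fin (k+1)) R) (h : ∑ i, B i = Pi.single 0 1) :
    B.det = (B.submatrix Fin.succ Fin.succ).det := by
  have := B.det_updateRow_sum 0 fun _ => 1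
  simp only [one_smul, h] at this
  rw [← this, Matrix.det_succ_row_zero, Fin.sum_univ_succ]
  simp only [Matrix.updateRow_self, Pi.single_eq_same, Pi.single_eq_of_ne (Fin.succ_ne_zero _),
    mul_zero, zero_mul, Finset.sum_const_zero, add_zero, Fin.val_zero, pow_zero, one_mul,
    Fin.succAbove_zero]
  rfl

section Barycentric

variable {n k : ℕ}

def dnuLinear (n : ℕ) (j : Fin (n+1)) : (Fin n → ℝ) →ₗ[ℝ] ℝ :=
  Fin.cases (-∑ i, LinearMap.proj i) LinearMap.proj j

@[simp] lemma dnuLinear_apply (j : Fin (n+1)) (u : Fin n → ℝ) : dnuLinear n j u = dnu n j u := by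
  cases j using Fin.cases <;> simp [dnuLinear, dnu]

lemma nu_vert (b a : Fin (n+1)) : nu n b (vert n a) = if a = b then 1 else 0 := by
  cases b using Fin.cases <;> cases a using Fin.cases <;> simp [nu, vert, Pi.single_apply, eq_comm]

lemma dnu_vert (b a : Fin (n+1)) :
    dnu n b (vert n a) = (if a = b then 1 else 0) - if b = 0 then 1 else 0 := by
  cases b using Fin.cases <;> cases a using Fin.cases <;> simp [dnu, vert, Pi.single_apply, eq_comm]

lemma dnu_vert_sub_vert (b a a' : Fin (n+1)) :
    dnu n b (vert n a - vert n a') = (if a = b then 1 else 0) - if a' = b then 1 else 0 := by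
  rw [← dnuLinear_apply, map_sub, dnuLinear_apply, dnuLinear_apply, dnu_vert, dnu_vert]
  ring

lemma nu_add (b : Fin (n+1)) (x u : Fin n → ℝ) : nu n b (x + u) = nu n b x + dnu n b u := by
  cases b using Fin.cases <;>
    simp only [nu, dnu, Fin.cases_zero, Fin.cases_succ, Pi.add_apply, Finset.sum_add_distrib]
  ring

lemma sum_nu (y : Fin k → ℝ) : ∑ p, nu k p y = 1 := by
  simp [Fin.sum_univ_succ, nu]

lemma sum_dnu (u : Fin k → ℝ) : ∑ p, dnu k p u = 0 := by
  simp [Fin.sum_univ_succ, dnu]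

lemma dnu_eq_sum (p : Fin (k+1)) (u : Fin k → ℝ) :
    dnu k p u = ∑ m, u m * ((if m.succ = p then 1 else 0) - if 0 = p then 1 else 0) := by
  cases p using Fin.cases <;> simp [dnu, Fin.succ_ne_zero, (Fin.succ_ne_zero _).symm]

/-- Laplace expansion along the first column of the matrix with columns `ν(y), dν(w₀), …`, whose
rows sum to `(1, 0, …, 0)`. -/
lemma sum_neg_one_pow_mul_nu_mul_det (y : Fin k → ℝ) (w : Fin k → Fin k → ℝ) :
    ∑ j : Fin (k+1), (-1) ^ (j : ℕ) * nu k j y *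
      (Matrix.of fun t m => dnu k (j.succAbove t) (w m)).det =
      (Matrix.of fun i j => w j i).det := by
  let r : Fin (k+1) → Fin (k+1) → ℝ := fun j => Fin.cons (nu k j y) fun m => dnu k j (w m)
  have hrows : ∑ j, r j = Pi.single 0 1 := by
    ext c
    rw [Finset.sum_apply]
    cases c using Fin.cases <;> simp [r, sum_nu, sum_dnu]
  calc _ = (Matrix.of r).det := by rw [Matrix.det_succ_column_zero]; rfl
    _ = _ := by rw [(Matrix.of r).det_eq_det_submatrix_succ_of_sum_rows hrows]; rfl

lemma affineIndependent_vert (n : ℕ) : AffineIndependent ℝ (vert n) := by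
  rw [affineIndependent_iff_linearIndependent_vsub ℝ _ 0]
  refine (linearIndependent_equiv' (finSuccAboveEquiv 0) ?_).1
    (Pi.basisFun ℝ (Fin n)).linearIndependent
  ext i : 1
  simp [vert, finSuccAboveEquiv_apply]

noncomputable def vertAffineBasis (n : ℕ) : AffineBasis (Fin (n+1)) ℝ (Fin n → ℝ) :=
  ⟨vert n, affineIndependent_vert n,
    (affineIndependent_vert n).affineSpan_eq_top_iff_card_eq_finrank_add_one.2 (by simp)⟩

lemma coe_vertAffineBasis (n : ℕ) : ⇑(vertAffineBasis n) = vert n := rfl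

lemma vert_mem_stdSimp (p : Fin (k+1)) : vert k p ∈ stdSimp k := by
  cases p using Fin.cases with
  | zero => simp [vert, stdSimp]
  | succ p =>
    refine ⟨fun i => ?_, by simp [vert]⟩
    simp only [vert, Fin.cases_succ, Pi.single_apply]
    split_ifs <;> norm_num

end Barycentric

section AffineFns

def affineFns (n : ℕ) : Submodule ℝ ((Fin n → ℝ) → ℝ) where
  carrier := {g | IsAffineFn g}
  add_mem' := by
    rintro f g ⟨a, b, hf⟩ ⟨a', b', hg⟩
    exact ⟨a + a', b + b', fun x => by simp only [Pi.add_apply, hf, hg, add_mul, Finset.sum_add_distrib]; ring⟩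
  zero_mem' := ⟨0, 0, by simp⟩
  smul_mem' := by
    rintro c f ⟨a, b, hf⟩
    exact ⟨c • a, c * b, fun x => by simp [hf, mul_add, Finset.mul_sum, mul_assoc]⟩

variable {n k : ℕ}

lemma isAffineFn_nu (j : Fin (n+1)) : IsAffineFn (nu n j) := by
  cases j using Fin.cases with
  | zero => exact ⟨fun _ => -1, 1, fun x => by simp only [nu, Fin.cases_zero, neg_mul, one_mul, Finset.sum_neg_distrib]; ring⟩
  | succ i => exact ⟨Pi.single i 1, 0, fun x => by simp [nu, Pi.single_apply]⟩

lemma IsAffineFn.eq_zero_of_vert {g : (Fin n → ℝ) → ℝ} (hg : IsAffineFn g)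
    (hvert : ∀ a, g (vert n a) = 0) (x : Fin n → ℝ) : g x = 0 := by
  obtain ⟨a, b, hab⟩ := hg
  have hb : b = 0 := by simpa [hab, vert] using hvert 0
  have ha : a = 0 := funext fun i => by simpa [hab, vert, hb, Pi.single_apply] using hvert i.succ
  simp [hab, ha, hb]

lemma isAffineFn_formEval {f : KSubset n k → (Fin n → ℝ) → ℝ} (hf : ∀ I, IsAffineFn (f I))
    (v : Fin k → Fin n → ℝ) : IsAffineFn fun x => formEval f x v := by
  have : (fun x => formEval f x v) = ∑ I, dxI I v • f I := by
    ext x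
    simp [formEval, mul_comm]
  change _ ∈ affineFns n
  rw [this]
  exact Submodule.sum_mem _ fun I _ => Submodule.smul_mem _ _ (hf I)

lemma isAffineFn_whitney (c : KSubset (n+1) (k+1) → ℝ) (v : Fin k → Fin n → ℝ) :
    IsAffineFn fun x => whitney c x v := by
  have : (fun x => whitney c x v) = ∑ S : KSubset (n+1) (k+1), c S • (k.factorial : ℝ) •
      ∑ j : Fin (k+1), ((-1) ^ (j : ℕ) * (Matrix.of fun t m =>
        dnu n (S.emb (j.succAbove t)) (v m)).det) • nu n (S.emb j) := by
    ext x
    simp only [whitney, whitneyFace, Finset.sum_apply, Pi.smul_apply, smul_eq_mul, Finset.mul_sum]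
    refine Finset.sum_congr rfl fun S _ => Finset.sum_congr rfl fun j _ => ?_
    simp only [Finset.coe_orderIsoOfFin_apply, KSubset.orderEmbOfFin_eq_emb]
    ring
  change _ ∈ affineFns n
  rw [this]
  exact Submodule.sum_mem _ fun S _ => Submodule.smul_mem _ _ <| Submodule.smul_mem _ _ <|
    Submodule.sum_mem _ fun j _ => Submodule.smul_mem _ _ (isAffineFn_nu _)

end AffineFns

section Forms

variable {n k : ℕ}

noncomputable def formAlt (f : KSubset n k → (Fin n → ℝ) → ℝ) (x : Fin n → ℝ) :
    (Fin n → ℝ) [⋀^Fin k]→ₗ[ℝ] ℝ :=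
  ∑ I, f I x • detAlt fun i => LinearMap.proj (I.emb i)

lemma formAlt_apply (f : KSubset n k → (Fin n → ℝ) → ℝ) (x : Fin n → ℝ)
    (v : Fin k → Fin n → ℝ) : formAlt f x v = formEval f x v := by
  simp [formAlt, formEval, dxI, detAlt_apply, AlternatingMap.finsetSum_apply]

noncomputable def whitneyAlt (c : KSubset (n+1) (k+1) → ℝ) (x : Fin n → ℝ) :
    (Fin n → ℝ) [⋀^Fin k]→ₗ[ℝ] ℝ :=
  ∑ S, c S • (k.factorial : ℝ) • ∑ j : Fin (k+1), ((-1) ^ (j : ℕ) * nu n (S.emb j) x) •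
    detAlt fun t => dnuLinear n (S.emb (j.succAbove t))

lemma whitneyAlt_apply (c : KSubset (n+1) (k+1) → ℝ) (x : Fin n → ℝ) (v : Fin k → Fin n → ℝ) :
    whitneyAlt c x v = whitney c x v := by
  simp [whitneyAlt, whitney, whitneyFace, detAlt_apply, AlternatingMap.finsetSum_apply, mul_assoc]

end Forms

section Face

variable {n k : ℕ} (S : KSubset (n+1) (k+1))

lemma facePt_eq_add_faceDir (y : Fin k → ℝ) : facePt S y = vert n (S.emb 0) + faceDir S y := rfl

lemma faceDir_sub (u u' : Fin k → ℝ) : faceDir S (u - u') = faceDir S u - faceDir S u' := by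
  simp [faceDir, sub_smul, Finset.sum_sub_distrib]

lemma faceDir_vert (p : Fin (k+1)) :
    faceDir S (vert k p) = vert n (S.emb p) - vert n (S.emb 0) := by
  cases p using Fin.cases with
  | zero => simp [faceDir, vert]
  | succ p => simp [faceDir, vert, Pi.single_apply]

lemma facePt_vert (p : Fin (k+1)) : facePt S (vert k p) = vert n (S.emb p) := by
  rw [facePt_eq_add_faceDir, faceDir_vert, add_sub_cancel]

lemma faceDir_vert_sub_vert (p q : Fin (k+1)) :
    faceDir S (vert k p - vert k q) = vert n (S.emb p) - vert n (S.emb q) := by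
  rw [faceDir_sub, faceDir_vert, faceDir_vert, sub_sub_sub_cancel_right]

lemma dnu_faceDir (b : Fin (n+1)) (u : Fin k → ℝ) :
    dnu n b (faceDir S u) =
      ∑ m, u m * ((if S.emb m.succ = b then 1 else 0) - if S.emb 0 = b then 1 else 0) := by
  rw [faceDir, ← dnuLinear_apply, map_sum]
  refine Finset.sum_congr rfl fun m _ => ?_
  simp [dnu_vert_sub_vert]

lemma dnu_faceDir_emb (p : Fin (k+1)) (u : Fin k → ℝ) :
    dnu n (S.emb p) (faceDir S u) = dnu k p u := by
  rw [dnu_faceDir, dnu_eq_sum]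
  simp [S.emb.injective.eq_iff]

lemma dnu_faceDir_of_notMem {b : Fin (n+1)} (hb : b ∉ S.1) (u : Fin k → ℝ) :
    dnu n b (faceDir S u) = 0 := by
  simp [dnu_faceDir, S.emb_ne_of_notMem hb]

lemma nu_facePt_emb (p : Fin (k+1)) (y : Fin k → ℝ) :
    nu n (S.emb p) (facePt S y) = nu k p y := by
  rw [facePt_eq_add_faceDir, nu_add, nu_vert, dnu_faceDir_emb, ← zero_add y, nu_add, zero_add]
  simp [← nu_vert (n := k), vert]

lemma nu_facePt_of_notMem {b : Fin (n+1)} (hb : b ∉ S.1) (y : Fin k → ℝ) :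
    nu n b (facePt S y) = 0 := by
  simp [facePt_eq_add_faceDir, nu_add, nu_vert, dnu_faceDir_of_notMem S hb,
    S.emb_ne_of_notMem hb]

lemma whitneyFace_pullback_self (y : Fin k → ℝ) (w : Fin k → Fin k → ℝ) :
    whitneyFace S (facePt S y) (fun i => faceDir S (w i)) =
      k.factorial * (Matrix.of fun i j => w j i).det := by
  simp only [whitneyFace, Finset.coe_orderIsoOfFin_apply, KSubset.orderEmbOfFin_eq_emb,
    nu_facePt_emb, dnu_faceDir_emb, sum_neg_one_pow_mul_nu_mul_det]

variable {S} in
lemma whitneyFace_pullback_of_ne {T : KSubset (n+1) (k+1)} (hTS : T ≠ S) (y : Fin k → ℝ)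
    (w : Fin k → Fin k → ℝ) : whitneyFace T (facePt S y) (fun i => faceDir S (w i)) = 0 := by
  obtain ⟨b, hbT, hbS⟩ : ∃ b ∈ T.1, b ∉ S.1 := Finset.not_subset.1 fun h =>
    hTS (Subtype.ext (Finset.eq_of_subset_of_card_le h (by rw [S.2, T.2])))
  obtain ⟨j₀, rfl⟩ := T.exists_emb_eq hbT
  simp only [whitneyFace, Finset.coe_orderIsoOfFin_apply, KSubset.orderEmbOfFin_eq_emb]
  rw [Finset.sum_eq_zero, mul_zero]
  intro j _
  rcases eq_or_ne j j₀ with rfl | hj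
  · rw [nu_facePt_of_notMem S hbS, mul_zero, zero_mul]
  · obtain ⟨t, ht⟩ := Fin.exists_succAbove_eq hj.symm
    rw [Matrix.det_eq_zero_of_row_eq_zero t fun m => ?_, mul_zero]
    simp [ht, dnu_faceDir_of_notMem S hbS]

lemma whitney_pullback (c : KSubset (n+1) (k+1) → ℝ) (y : Fin k → ℝ) (w : Fin k → Fin k → ℝ) :
    whitney c (facePt S y) (fun i => faceDir S (w i)) =
      c S * k.factorial * (Matrix.of fun i j => w j i).det := by
  rw [whitney, Finset.sum_eq_single S
    (fun T _ hT => by rw [whitneyFace_pullback_of_ne hT, mul_zero]) (by simp),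
    whitneyFace_pullback_self, mul_assoc]

end Face

lemma eq_zero_at_vert_of_pullback_eq_zero {n k : ℕ}
    {Ψ : (Fin n → ℝ) → (Fin n → ℝ) [⋀^Fin k]→ₗ[ℝ] ℝ}
    (hΨ : ∀ (S : KSubset (n+1) (k+1)), ∀ y ∈ stdSimp k, ∀ w : Fin k → Fin k → ℝ,
      Ψ (facePt S y) (fun i => faceDir S (w i)) = 0) (a : Fin (n+1)) :
    Ψ (vert n a) = 0 := by
  classical
  refine ((vertAffineBasis n).basisOf a).ext_alternating fun v hv => ?_
  let S : KSubset (n+1) (k+1) :=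
    ⟨insert a (Finset.univ.map ⟨fun i => (v i).1, Subtype.val_injective.comp hv⟩), by
      rw [Finset.card_insert_of_notMem (by simpa using fun i => (v i).2), Finset.card_map,
        Finset.card_fin]⟩
  obtain ⟨r, hr⟩ := S.exists_emb_eq (Finset.mem_insert_self a _)
  choose m hm using fun i =>
    S.exists_emb_eq (Finset.mem_insert_of_mem (Finset.mem_map_of_mem _ (Finset.mem_univ i)))
  have := hΨ S (vert k r) (vert_mem_stdSimp r) fun i => vert k (m i) - vert k r
  simp only [facePt_vert, faceDir_vert_sub_vert, hm, hr] at this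
  simpa [AffineBasis.basisOf_apply, coe_vertAffineBasis] using this

section Volume

def scaledSimp (m : ℕ) (c : ℝ) : Set (Fin m → ℝ) := {x | (∀ i, 0 ≤ x i) ∧ ∑ i, x i ≤ c}

lemma scaledSimp_one (m : ℕ) : scaledSimp m 1 = stdSimp m := rfl

lemma scaledSimp_eq_empty {m : ℕ} {c : ℝ} (hc : c < 0) : scaledSimp m c = ∅ :=
  Set.eq_empty_of_forall_notMem fun _ hx =>
    (Finset.sum_nonneg fun i _ => hx.1 i).not_gt (hx.2.trans_lt hc)

lemma measurableSet_scaledSimp (m : ℕ) (c : ℝ) : MeasurableSet (scaledSimp m c) := by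
  simp only [scaledSimp, Set.ofPred_and, Set.ofPred_forall]
  exact (MeasurableSet.iInter fun i => measurableSet_le (by fun_prop) (by fun_prop)).inter
    (measurableSet_le (by fun_prop) (by fun_prop))

lemma measurableSet_stdSimp (m : ℕ) : MeasurableSet (stdSimp m) := measurableSet_scaledSimp m 1

lemma cons_mem_scaledSimp {m : ℕ} {c t : ℝ} {y : Fin m → ℝ} :
    (Fin.cons t y : Fin (m+1) → ℝ) ∈ scaledSimp (m+1) c ↔ 0 ≤ t ∧ y ∈ scaledSimp m (c - t) := by
  simp only [scaledSimp, Set.mem_ofPred_eq, Fin.forall_fin_succ, Fin.sum_univ_succ, Fin.cons_zero,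
    Fin.cons_succ, le_sub_iff_add_le', and_assoc]

lemma lintegral_indicator_pow_div_factorial (m : ℕ) {c : ℝ} (hc : 0 ≤ c) :
    ∫⁻ t, (Set.Icc 0 c).indicator (fun t => ENNReal.ofReal ((c - t) ^ m / m.factorial)) t =
      ENNReal.ofReal (c ^ (m+1) / (m+1).factorial) := by
  have hcont : Continuous fun t : ℝ => (c - t) ^ m / m.factorial := by fun_prop
  rw [lintegral_indicator measurableSet_Icc, ← ofReal_integral_eq_lintegral_ofReal
    hcont.integrableOn_Icc ?_, integral_Icc_eq_integral_Ioc, ← intervalIntegral.integral_of_le hc,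
    intervalIntegral.integral_div, intervalIntegral.integral_comp_sub_left (fun t => t ^ m),
    integral_pow]
  · congr 1
    push_cast [Nat.factorial_succ]
    field_simp
    ring
  · filter_upwards [ae_restrict_mem measurableSet_Icc] with t ht
    have : 0 ≤ c - t := sub_nonneg.2 ht.2
    positivity

/-- Slicing along the first coordinate: `vol (c Δᵐ⁺¹) = ∫₀ᶜ vol ((c - t) Δᵐ) dt`. -/
lemma volume_scaledSimp (m : ℕ) {c : ℝ} (hc : 0 ≤ c) :
    volume (scaledSimp m c) = ENNReal.ofReal (c ^ m / m.factorial) := by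
  induction m generalizing c with
  | zero =>
    have : scaledSimp 0 c = Set.univ := Set.eq_univ_of_forall fun x => by simp [scaledSimp, hc]
    rw [this, volume_pi, Measure.pi_univ]
    simp
  | succ m ih =>
    let e := MeasurableEquiv.piFinSuccAbove (fun _ : Fin (m+1) => ℝ) 0
    have hslice (t : ℝ) : volume (Prod.mk t ⁻¹' (e.symm ⁻¹' scaledSimp (m+1) c)) =
        (Set.Icc 0 c).indicator (fun t => ENNReal.ofReal ((c - t) ^ m / m.factorial)) t := by
      have : Prod.mk t ⁻¹' (e.symm ⁻¹' scaledSimp (m+1) c) =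
          {y | 0 ≤ t ∧ y ∈ scaledSimp m (c - t)} := by
        ext y
        simp only [Set.mem_preimage, e, MeasurableEquiv.piFinSuccAbove_symm_apply,
          Fin.insertNthEquiv, Equiv.coe_fn_mk, Fin.insertNth_zero', cons_mem_scaledSimp,
          Set.mem_ofPred_eq]
      rw [this]
      by_cases ht : t ∈ Set.Icc 0 c
      · simp [Set.indicator_of_mem ht, ht.1, ih (sub_nonneg.2 ht.2)]
      · rw [Set.indicator_of_notMem ht]
        rcases not_and_or.1 ht with ht | ht
        · simp [ht]
        · simp [scaledSimp_eq_empty (sub_neg.2 (not_le.1 ht))]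
    calc volume (scaledSimp (m+1) c)
        = volume (e ⁻¹' (e.symm ⁻¹' scaledSimp (m+1) c)) :=
          (congrArg volume (e.symm.symm_preimage_preimage _)).symm
      _ = (volume.prod volume) (e.symm ⁻¹' scaledSimp (m+1) c) :=
        (volume_preserving_piFinSuccAbove (fun _ : Fin (m+1) => ℝ) 0).measure_preimage_equiv _
      _ = ∫⁻ t, (Set.Icc 0 c).indicator
            (fun t => ENNReal.ofReal ((c - t) ^ m / m.factorial)) t := by
        rw [Measure.prod_apply (e.symm.measurable (measurableSet_scaledSimp _ _))]
        simp_rw [hslice]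
      _ = _ := lintegral_indicator_pow_div_factorial m hc

lemma volume_stdSimp (m : ℕ) : volume (stdSimp m) = ENNReal.ofReal (m.factorial : ℝ)⁻¹ := by
  rw [← scaledSimp_one, volume_scaledSimp m zero_le_one, one_pow, one_div]

end Volume

lemma faceIntegral_eq_of_pullback {n k : ℕ} {F : (Fin n → ℝ) → (Fin k → Fin n → ℝ) → ℝ}
    {S : KSubset (n+1) (k+1)} {cst : ℝ}
    (h : ∀ y ∈ stdSimp k, ∀ w : Fin k → Fin k → ℝ,
      F (facePt S y) (fun i => faceDir S (w i)) = cst * (Matrix.of fun i j => w j i).det) :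
    faceIntegral S F = cst / k.factorial := by
  have hconst : Set.EqOn (fun y => F (facePt S y) fun s => faceDir S (Pi.single s 1))
      (fun _ => cst) (stdSimp k) := fun y hy => by
    have hone : (Matrix.of fun i j => (Pi.single j 1 : Fin k → ℝ) i) = 1 := by
      ext i j
      simp [Matrix.one_apply, Pi.single_apply]
    simpa [hone] using h y hy fun i => Pi.single i 1
  rw [faceIntegral, setIntegral_congr_fun (measurableSet_stdSimp k) hconst, setIntegral_const,
    measureReal_def, volume_stdSimp, ENNReal.toReal_ofReal (by positivity), smul_eq_mul,
    div_eq_inv_mul]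

theorem whitney_deRham_id_general {n k : ℕ}
    (f : {s : Finset (Fin n) // s.card = k} → (Fin n → ℝ) → ℝ)
    (hf : ∀ I, IsAffineFn (f I)) (hconst : ConstOnFaces (formEval f)) :
    ∀ x ∈ stdSimp n, ∀ v : Fin k → Fin n → ℝ,
      formEval f x v = whitney (fun S => faceIntegral S (formEval f)) x v := by
  intro x _ v
  choose cst hcst using hconst
  set c := fun S => faceIntegral S (formEval f)
  have hc (S : KSubset (n+1) (k+1)) : c S * k.factorial = cst S := by
    simp [c, faceIntegral_eq_of_pullback (hcst S), Nat.factorial_ne_zero]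
  let Ψ x := formAlt f x - whitneyAlt c x
  have hΨ (S : KSubset (n+1) (k+1)) (y) (hy : y ∈ stdSimp k) (w : Fin k → Fin k → ℝ) :
      Ψ (facePt S y) (fun i => faceDir S (w i)) = 0 := by
    simp [Ψ, formAlt_apply, whitneyAlt_apply, hcst S y hy, whitney_pullback, hc]
  have haff : IsAffineFn fun x => Ψ x v := by
    simp only [Ψ, AlternatingMap.sub_apply, formAlt_apply, whitneyAlt_apply]
    exact (affineFns n).sub_mem (isAffineFn_formEval hf v) (isAffineFn_whitney c v)
  have hΨx := haff.eq_zero_of_vert (fun a => by simp [eq_zero_at_vert_of_pullback_eq_zero hΨ a]) x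
  simpa [Ψ, formAlt_apply, whitneyAlt_apply, sub_eq_zero] using hΨx

/-- `W ∘ R = id` on `Λᵏₑ`: every `k`-form with affine coefficients and constant pullbacks to
all `k`-faces equals the Whitney form of its de Rham cochain on the standard `n`-simplex. -/
theorem whitney_deRham_id {n k : ℕ} (hk : k ≤ n)
    (f : {s : Finset (Fin n) // s.card = k} → (Fin n → ℝ) → ℝ)
    (hf : ∀ I, IsAffineFn (f I)) (hconst : ConstOnFaces (formEval f)) :
    ∀ x ∈ stdSimp n, ∀ v : Fin k → Fin n → ℝ,
      formEval f x v = whitney (fun S => faceIntegral S (formEval f)) x v :=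
  whitney_deRham_id_general f hf hconst
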